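/- arXiv:1801.03306 — 3 statements merged into one kernel-verified Lean document; each statement's English description precedes it below -/
import Mathlib

section
/- Let S₁, …, S_m be independent uniformly random elements of F_q, and define the random matrix Q ∈ F_q^{l×m} by Q_{i,j} := (S_j)^i for 1 ≤ i ≤ l, 1 ≤ j ≤ m, where l ≥ m. Then for any fixed row vectors x ∈ F_q^m and y ∈ F_q^l with y ≠ 0, the probability that x = yQ is at most (l/q)^m. -/
/-!
For fixed `y ≠ 0` the `j`-th equation `x j = ∑ i, y i * S_j ^ (i + 1)` says that `S_j` is a
root of a polynomial of degree at most `l` which is not constant, since it has a nonzero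
coefficient in positive degree. Each coordinate therefore has at most `l` admissible values,
and as the equations for different `j` involve disjoint coordinates, at most `l ^ m` of the
`q ^ m` vectors `S` satisfy all of them.
-/

open Polynomial

namespace Polynomial

theorem natCard_eval_eq_le_natDegree {R : Type*} [CommRing R] [IsDomain R] {p : R[X]}
    (hp : 0 < p.degree) (a : R) : Nat.card {s // p.eval s = a} ≤ p.natDegree := by
  classical
  calc Nat.card {s // p.eval s = a}
      = Nat.card ((p - C a).roots.toFinset : Set R) :=
        Nat.card_congr <| Equiv.subtypeEquivRight fun s => by simp [mem_roots_sub_C hp]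
    _ = (p - C a).roots.toFinset.card := Nat.card_coe_set_eq _ |>.trans (by simp)
    _ ≤ Multiset.card (p - C a).roots := Multiset.toFinset_card_le _
    _ ≤ p.natDegree := card_roots_sub_C' hp

variable {R : Type*} [Semiring R] {l : ℕ} (y : Fin l → R)

theorem coeff_sum_C_mul_X_pow_succ (k : Fin l) :
    (∑ i : Fin l, C (y i) * X ^ ((i : ℕ) + 1)).coeff ((k : ℕ) + 1) = y k := by
  simp [coeff_X_pow, Fin.val_inj]

theorem natDegree_sum_C_mul_X_pow_succ_le :
    (∑ i : Fin l, C (y i) * X ^ ((i : ℕ) + 1)).natDegree ≤ l :=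
  natDegree_sum_le_of_forall_le _ _ fun i _ =>
    (natDegree_C_mul_X_pow_le _ _).trans i.isLt

theorem degree_sum_C_mul_X_pow_succ_pos (hy : y ≠ 0) :
    0 < (∑ i : Fin l, C (y i) * X ^ ((i : ℕ) + 1)).degree := by
  obtain ⟨k, hk⟩ := Function.ne_iff.mp hy
  exact natDegree_pos_iff_degree_pos.mp <| Nat.lt_of_lt_of_le k.val.succ_pos
    (le_natDegree_of_ne_zero (by rwa [coeff_sum_C_mul_X_pow_succ]))

end Polynomial

theorem Nat.card_subtype_forall_pi_le {ι α : Type*} [Fintype ι] (p : ι → α → Prop) {k : ℕ}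
    (hp : ∀ j, Nat.card {s // p j s} ≤ k) :
    Nat.card {S : ι → α // ∀ j, p j (S j)} ≤ k ^ Fintype.card ι := by
  rw [Nat.card_congr Equiv.subtypePiEquivPi, Nat.card_pi, ← Finset.card_univ,
    ← Finset.prod_const]
  exact Finset.prod_le_prod' fun j _ => hp j

theorem stmt6_general (F : Type) [Field F] [Fintype F] (l m : ℕ)
    (x : Fin m → F) (y : Fin l → F) (hy : y ≠ 0) :
    (Nat.card {S : Fin m → F //
        ∀ j, x j = ∑ i : Fin l, y i * (S j) ^ ((i : ℕ) + 1)} : ℝ) /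
      (Fintype.card F : ℝ) ^ m ≤ ((l : ℝ) / (Fintype.card F : ℝ)) ^ m := by
  have hfiber (j : Fin m) :
      Nat.card {s : F // x j = ∑ i : Fin l, y i * s ^ ((i : ℕ) + 1)} ≤ l := by
    have hcard := natCard_eval_eq_le_natDegree (degree_sum_C_mul_X_pow_succ_pos y hy) (x j)
    simp only [eval_finsetSum, eval_mul, eval_C, eval_pow, eval_X] at hcard
    simp only [eq_comm (a := x j)]
    exact hcard.trans (natDegree_sum_C_mul_X_pow_succ_le y)
  have hcount := Nat.card_subtype_forall_pi_le _ hfiber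
  rw [Fintype.card_fin] at hcount
  rw [div_pow]
  gcongr
  exact_mod_cast hcount

/-- Vandermonde probability bound, Claim 5 of Jaggi et al.:
for i.i.d. uniform `S₁,…,S_m ∈ F_q`, the random matrix `Q ∈ F_q^{l×m}` with
`Q_{i,j} = (S_j)^i` (`1 ≤ i ≤ l`, `l ≥ m`) satisfies, for fixed row vectors `x ∈ F_q^m`
and `y ∈ F_q^l` with `y ≠ 0`, `Pr[x = yQ] ≤ (l/q)^m`. -/
theorem stmt6 (F : Type) [Field F] [Fintype F] (l m : ℕ) (hlm : m ≤ l)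
    (x : Fin m → F) (y : Fin l → F) (hy : y ≠ 0) :
    (Nat.card {S : Fin m → F //
        ∀ j, x j = ∑ i : Fin l, y i * (S j) ^ ((i : ℕ) + 1)} : ℝ) /
      (Fintype.card F : ℝ) ^ m ≤ ((l : ℝ) / (Fintype.card F : ℝ)) ^ m :=
  stmt6_general F l m x y hy
end

section
/- Let P₁ := Σ_{x∈F_q^m} |x,x⟩_b⟨x,x|_b and P₂ := Σ_{z∈F_q^m} |z,z̄⟩_p⟨z,z̄|_p be the projections onto the spans of the diagonal bit-basis states and the conjugate-diagonal phase-basis states, respectively, acting on (C^q)^{⊗m} ⊗ (C^q)^{⊗m}. Then P₁P₂ = P₂P₁ = |Φ⟩⟨Φ| where |Φ⟩ = (1/√(q^m)) Σ_{i∈F_q^m} |i,i⟩_b is the maximally entangled state. -/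
open scoped BigOperators Matrix
open Classical

/-- The trace bilinear pairing `(x, z) := Σᵢ tr(xᵢ zᵢ)` on `F_q^m`, valued in `{0,…,s-1}`. -/
noncomputable def pairTr (s : ℕ) (F : Type) [Field F] [Fintype F] [Algebra (ZMod s) F]
    (m : ℕ) (x z : Fin m → F) : ℕ :=
  (∑ i, Algebra.trace (ZMod s) F (x i * z i)).val

/-- The bit basis state `|x,x⟩_b` on the doubled system, as an amplitude function. -/
noncomputable def bitPairVec (F : Type) [Field F] [Fintype F] (m : ℕ) (x : Fin m → F) :
    ((Fin m → F) × (Fin m → F)) → ℂ :=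
  fun p => if p = (x, x) then 1 else 0

/-- The phase basis state `|z, z̄⟩_p` on the doubled system, as an amplitude function:
`(1/q^m) ω^{-(a,z)} ω^{+(b,z)}` at the bit label `(a, b)`. -/
noncomputable def phasePairVec (s : ℕ) (F : Type) [Field F] [Fintype F]
    [Algebra (ZMod s) F] (m : ℕ) (z : Fin m → F) :
    ((Fin m → F) × (Fin m → F)) → ℂ :=
  fun p => (1 / ((Fintype.card F : ℂ) ^ m)) *
    Complex.exp (-(2 * Real.pi * Complex.I / s) * (pairTr s F m p.1 z : ℕ)) *
    Complex.exp ((2 * Real.pi * Complex.I / s) * (pairTr s F m p.2 z : ℕ))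

/-- `P₁ = Σ_x |x,x⟩_b⟨x,x|_b`. -/
noncomputable def P₁ (F : Type) [Field F] [Fintype F] (m : ℕ) :
    Matrix ((Fin m → F) × (Fin m → F)) ((Fin m → F) × (Fin m → F)) ℂ :=
  ∑ x : Fin m → F, Matrix.vecMulVec (bitPairVec F m x) (star (bitPairVec F m x))

/-- `P₂ = Σ_z |z,z̄⟩_p⟨z,z̄|_p`. -/
noncomputable def P₂ (s : ℕ) (F : Type) [Field F] [Fintype F] [Algebra (ZMod s) F] (m : ℕ) :
    Matrix ((Fin m → F) × (Fin m → F)) ((Fin m → F) × (Fin m → F)) ℂ :=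
  ∑ z : Fin m → F,
    Matrix.vecMulVec (phasePairVec s F m z) (star (phasePairVec s F m z))

/-- The maximally entangled state `|Φ⟩ = (1/√(q^m)) Σ_i |i,i⟩_b`. -/
noncomputable def maxEnt (F : Type) [Field F] [Fintype F] (m : ℕ) :
    ((Fin m → F) × (Fin m → F)) → ℂ :=
  fun p => if p.1 = p.2 then ((1 / Real.sqrt ((Fintype.card F : ℝ) ^ m) : ℝ) : ℂ) else 0

/-!
`P₁` is the diagonal projection onto the span of the `|x,x⟩_b`. Expanding `P₂` in the bit basis,
the amplitude of `|z,z̄⟩_p` at `(a, b)` is `q^{-m} ψ((b - a)·z)` for the character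
`ψ = ω^{tr(·)}` of `F_q`, which is primitive because the trace is onto `F_s`. Orthogonality of
the characters `z ↦ ψ(w·z)` then gives `⟨a,b|P₂|c,d⟩ = q^{-m} [b - a = d - c]`. Multiplying by
`P₁` on either side restricts to `a = b` (resp. `c = d`), where this becomes
`q^{-m} [a = b ∧ c = d]`, the matrix of `|Φ⟩⟨Φ|`.
-/

open Matrix

namespace AddChar

variable {R R' : Type*}

theorem map_sum_eq_prod [AddCommMonoid R] [CommMonoid R'] {ι : Type*} (ψ : AddChar R R')
    (s : Finset ι) (a : ι → R) : ψ (∑ i ∈ s, a i) = ∏ i ∈ s, ψ (a i) := by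
  induction s using Finset.induction_on with
  | empty => simp
  | insert i s hi ih =>
    rw [Finset.sum_insert hi, Finset.prod_insert hi, map_add_eq_mul, ih]

theorem IsPrimitive.sum_dotProduct [CommRing R] [Fintype R] [CommRing R'] [IsDomain R']
    {ψ : AddChar R R'} (hψ : ψ.IsPrimitive) {ι : Type*} [Fintype ι] [DecidableEq ι]
    (w : ι → R) :
    ∑ z : ι → R, ψ (w ⬝ᵥ z) =
      if w = 0 then (Fintype.card R : R') ^ Fintype.card ι else 0 := by
  have hsplit : ∀ z : ι → R, ψ (w ⬝ᵥ z) = ∏ i, ψ (z i * w i) := fun z => by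
    simp only [dotProduct, map_sum_eq_prod, mul_comm]
  simp only [hsplit]
  rw [← Fintype.prod_sum fun i x => ψ (x * w i)]
  simp only [sum_mulShift _ hψ, Nat.cast_ite, Nat.cast_zero, Fintype.prod_ite_zero,
    Finset.prod_const, Finset.card_univ, funext_iff, Pi.zero_apply]

end AddChar

section TraceCharacter

variable (s : ℕ) [Fact s.Prime] (F : Type) [Field F] [Algebra (ZMod s) F]

noncomputable def traceChar : AddChar F ℂ :=
  ZMod.stdAddChar.compAddMonoidHom (Algebra.trace (ZMod s) F).toAddMonoidHom

theorem isPrimitive_traceChar [Fintype F] : (traceChar s F).IsPrimitive := by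
  refine AddChar.IsPrimitive.of_ne_one fun h => ?_
  obtain ⟨a, ha⟩ := Algebra.trace_surjective (ZMod s) F 1
  have h1 := DFunLike.congr_fun h a
  simp only [traceChar, AddChar.compAddMonoidHom_apply, LinearMap.toAddMonoidHom_coe, ha,
    AddChar.one_apply] at h1
  exact one_ne_zero (ZMod.injective_stdAddChar (h1.trans (AddChar.map_zero_eq_one _).symm))

theorem star_traceChar (a : F) : star (traceChar s F a) = traceChar s F (-a) := by
  have hchar : 0 < ringChar (ZMod s) := by
    rw [ZMod.ringChar_zmod_n]
    exact (Fact.out : s.Prime).pos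
  rw [AddChar.map_neg_eq_inv, Complex.star_def]
  exact (AddChar.starComp_apply hchar (φ := ZMod.stdAddChar) _).trans (AddChar.inv_apply' _ _)

theorem exp_pairTr [Fintype F] (m : ℕ) (x z : Fin m → F) :
    Complex.exp (2 * Real.pi * Complex.I / s * (pairTr s F m x z : ℕ)) =
      traceChar s F (x ⬝ᵥ z) := by
  rw [traceChar, AddChar.compAddMonoidHom_apply, LinearMap.toAddMonoidHom_coe, dotProduct,
    map_sum, ZMod.stdAddChar_apply, ZMod.toCircle_apply, pairTr]
  ring_nf

end TraceCharacter

section Projections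

variable (s : ℕ) [Fact s.Prime] (F : Type) [Field F] [Fintype F] [Algebra (ZMod s) F] (m : ℕ)

theorem phasePairVec_apply (z : Fin m → F) (p : (Fin m → F) × (Fin m → F)) :
    phasePairVec s F m z p =
      ((Fintype.card F : ℂ) ^ m)⁻¹ * traceChar s F ((p.2 - p.1) ⬝ᵥ z) := by
  rw [phasePairVec, neg_mul, Complex.exp_neg, exp_pairTr, exp_pairTr, sub_dotProduct,
    AddChar.map_sub_eq_div]
  ring

theorem P₂_apply (p r : (Fin m → F) × (Fin m → F)) :
    P₂ s F m p r = if p.2 - p.1 = r.2 - r.1 then ((Fintype.card F : ℂ) ^ m)⁻¹ else 0 := by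
  have hterm : ∀ z, phasePairVec s F m z p * star (phasePairVec s F m z r) =
      ((Fintype.card F : ℂ) ^ m)⁻¹ ^ 2 * traceChar s F ((p.2 - p.1 - (r.2 - r.1)) ⬝ᵥ z) := by
    intro z
    rw [phasePairVec_apply, phasePairVec_apply, star_mul', star_traceChar,
      sub_dotProduct (p.2 - p.1), sub_eq_add_neg ((p.2 - p.1) ⬝ᵥ z), AddChar.map_add_eq_mul]
    simp only [star_inv₀, star_pow, star_natCast]
    ring
  have hq : (Fintype.card F : ℂ) ^ m ≠ 0 :=
    pow_ne_zero _ (Nat.cast_ne_zero.2 Fintype.card_ne_zero)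
  simp only [P₂, Matrix.sum_apply, vecMulVec_apply, Pi.star_apply, hterm, ← Finset.mul_sum,
    (isPrimitive_traceChar s F).sum_dotProduct, Fintype.card_fin, sub_eq_zero]
  split_ifs
  · field_simp
  · rw [mul_zero]

theorem P₁_eq_diagonal : P₁ F m = diagonal fun p => if p.1 = p.2 then 1 else 0 := by
  ext p r
  have hterm : ∀ x, bitPairVec F m x p * star (bitPairVec F m x r) =
      if x = p.1 then diagonal (fun p => if p.1 = p.2 then 1 else 0) p r else 0 := fun x => by
    simp only [bitPairVec, diagonal_apply, star_one, star_zero, apply_ite star]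
    split_ifs <;> grind
  simp only [P₁, Matrix.sum_apply, vecMulVec_apply, Pi.star_apply, hterm, Finset.sum_ite_eq',
    Finset.mem_univ, if_true]

theorem vecMulVec_maxEnt_apply (p r : (Fin m → F) × (Fin m → F)) :
    vecMulVec (maxEnt F m) (star (maxEnt F m)) p r =
      if p.1 = p.2 ∧ r.1 = r.2 then ((Fintype.card F : ℂ) ^ m)⁻¹ else 0 := by
  have hq : (0 : ℝ) ≤ (Fintype.card F : ℝ) ^ m := by positivity
  have hnorm : ((1 / √((Fintype.card F : ℝ) ^ m) : ℝ) : ℂ) *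
      star ((1 / √((Fintype.card F : ℝ) ^ m) : ℝ) : ℂ) =
        ((Fintype.card F : ℂ) ^ m)⁻¹ := by
    rw [Complex.star_def, Complex.conj_ofReal, ← Complex.ofReal_mul, div_mul_div_comm,
      Real.mul_self_sqrt hq]
    push_cast
    ring
  simp only [vecMulVec_apply, Pi.star_apply, maxEnt]
  split_ifs <;> simp_all

end Projections

theorem stmt8_general (s : ℕ) [Fact (Nat.Prime s)] (F : Type) [Field F] [Fintype F]
    [Algebra (ZMod s) F] (m : ℕ) :
    P₁ F m * P₂ s F m = Matrix.vecMulVec (maxEnt F m) (star (maxEnt F m)) ∧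
    P₂ s F m * P₁ F m = Matrix.vecMulVec (maxEnt F m) (star (maxEnt F m)) := by
  constructor <;> ext p r
  · rw [P₁_eq_diagonal, diagonal_mul, P₂_apply, vecMulVec_maxEnt_apply]
    split_ifs <;> grind
  · rw [P₁_eq_diagonal, mul_diagonal, P₂_apply, vecMulVec_maxEnt_apply]
    split_ifs <;> grind

/-- `P₁ P₂ = P₂ P₁ = |Φ⟩⟨Φ|`. -/
theorem stmt8 (s : ℕ) [Fact (Nat.Prime s)] (F : Type) [Field F] [Fintype F]
    [Algebra (ZMod s) F] (hcard : ∃ t : ℕ, 0 < t ∧ Fintype.card F = s ^ t) (m : ℕ) :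
    P₁ F m * P₂ s F m = Matrix.vecMulVec (maxEnt F m) (star (maxEnt F m)) ∧
    P₂ s F m * P₁ F m = Matrix.vecMulVec (maxEnt F m) (star (maxEnt F m)) :=
  stmt8_general s F m
end

section
/- Fix positive integers m₀ > 2m₁ and n' > 3m₀, and let q' be a prime power. Let S₁,…,S_{4m₀} be i.i.d. uniform on F_{q'}, define Vandermonde-type matrices Q₁ ∈ F_{q'}^{(n'−2m₀)×m₀}, Q₃, Q₄ ∈ F_{q'}^{m₀×m₀} by Q₁;i,j = (S_j)^i, Q₃;i,j = (S_{2m₀+j})^i, Q₄;i,j = (S_{3m₀+j})^i, and let R₁ be the block lower-triangular product matrix defined in the protocol with these blocks. Then for every fixed nonzero row vector x = (x^A, x^B, x^C) ∈ F_{q'}^{m₀} × F_{q'}^{m₀} × F_{q'}^{n'−2m₀}, the probability that x^A − x^B(Q₃^⊤ + Q₄) − x^C Q₁ = 0 is at most ((n'−2m₀)/q')^{m₀}. -/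
/-!
Column `j` of the equation reads `p(s_j) = c_j`, where `p(t) = ∑ᵢ vᵢ t^(i+1)` is a nonzero
polynomial of degree at most `n' - 2m₀` (`v = x^C`, `s_j = S_j` if `x^C ≠ 0`; otherwise
`v = x^B`, `s_j = S_{3m₀+j}`) and `c_j` depends only on the other coordinates of `S`. Once those
are fixed, each `s_j` is one of at most `deg p` roots of `p - c_j`, so the equation has at most
`(n' - 2m₀)^m₀ q'^(3m₀)` solutions. If `x^B = x^C = 0` it reads `x^A = 0` and has none.
-/

open scoped Matrix
open Polynomial

section shiftedPoly

variable {R : Type*} [CommRing R] {d : ℕ}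

noncomputable def shiftedPoly (v : Fin d → R) : R[X] := ∑ i, C (v i) * X ^ ((i : ℕ) + 1)

theorem eval_shiftedPoly (v : Fin d → R) (t : R) :
    (shiftedPoly v).eval t = ∑ i, v i * t ^ ((i : ℕ) + 1) := by
  simp [shiftedPoly, eval_finsetSum]

theorem coeff_shiftedPoly_succ (v : Fin d → R) (i : Fin d) :
    (shiftedPoly v).coeff ((i : ℕ) + 1) = v i := by
  simp [shiftedPoly, coeff_X_pow, Fin.val_inj]

theorem natDegree_shiftedPoly_le (v : Fin d → R) : (shiftedPoly v).natDegree ≤ d :=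
  natDegree_sum_le_of_forall_le _ _ fun i _ =>
    natDegree_C_mul_X_pow_le (v i) _ |>.trans i.isLt

theorem degree_shiftedPoly_pos {v : Fin d → R} (hv : v ≠ 0) : 0 < (shiftedPoly v).degree := by
  obtain ⟨i, hi⟩ := Function.ne_iff.mp hv
  refine natDegree_pos_iff_degree_pos.mp (Nat.succ_pos i |>.trans_le (le_natDegree_of_ne_zero ?_))
  rwa [coeff_shiftedPoly_succ]

theorem vecMul_of_pow_succ {J : Type*} (v : Fin d → R) (s : J → R) :
    Matrix.vecMul v (Matrix.of fun (i : Fin d) j => s j ^ ((i : ℕ) + 1)) =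
      fun j => (shiftedPoly v).eval (s j) := by
  ext j
  simp [Matrix.vecMul, dotProduct, eval_shiftedPoly]

end shiftedPoly

section counting

variable {F : Type*} [Field F] [Fintype F]

theorem Polynomial.card_eval_eq_le (p : F[X]) (hp : 0 < p.degree) (c : F) :
    Nat.card {t : F // p.eval t = c} ≤ p.natDegree := by
  classical
  calc Nat.card {t : F // p.eval t = c} = (p - C c).roots.toFinset.card := by
        rw [Nat.card_eq_fintype_card, ← Fintype.card_coe]
        exact Fintype.card_congr (Equiv.subtypeEquivRight fun t => by
          simp [mem_roots_sub_C hp])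
    _ ≤ Multiset.card (p - C c).roots := Multiset.toFinset_card_le _
    _ ≤ p.natDegree := card_roots_sub_C' hp

theorem Polynomial.card_pi_eval_eq_le {J : Type*} [Fintype J] (p : F[X]) (hp : 0 < p.degree)
    (c : J → F) :
    Nat.card {a : J → F // ∀ j, p.eval (a j) = c j} ≤ p.natDegree ^ Fintype.card J := by
  rw [Nat.card_congr (Equiv.subtypePiEquivPi (β := fun _ => F) (p := fun j t => p.eval t = c j)),
    Nat.card_pi]
  exact (Finset.prod_le_pow_card _ _ _ fun j _ => p.card_eval_eq_le hp (c j)).trans_eq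
    (by rw [Finset.card_univ])

theorem Polynomial.card_prod_eval_eq_le {J β : Type*} [Fintype J] [Fintype β] (p : F[X])
    (hp : 0 < p.degree) (c : β → J → F) :
    Nat.card {x : β × (J → F) // ∀ j, p.eval (x.2 j) = c x.1 j} ≤
      Fintype.card β * p.natDegree ^ Fintype.card J := by
  refine (Nat.card_congr <| Equiv.subtypeProdEquivSigmaSubtype
    fun b (a : J → F) => ∀ j, p.eval (a j) = c b j).trans_le ?_
  rw [Nat.card_sigma]
  exact (Finset.sum_le_card_nsmul _ _ _ fun b _ => p.card_pi_eval_eq_le hp (c b)).trans_eq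
    (by rw [Finset.card_univ, smul_eq_mul])

theorem Polynomial.card_forall_eval_eq_le {ι J : Type*} [Fintype ι] [Fintype J] (σ : J ↪ ι)
    (p : F[X]) (hp : 0 < p.degree) (c : J → (ι → F) → F)
    (hc : ∀ j S S', (∀ i ∉ Set.range σ, S i = S' i) → c j S = c j S') :
    Nat.card {S : ι → F // ∀ j, p.eval (S (σ j)) = c j S} ≤
      Fintype.card F ^ (Fintype.card ι - Fintype.card J) * p.natDegree ^ Fintype.card J := by
  classical
  let K := {i // i ∉ Set.range σ}
  let extend (b : K → F) (i : ι) : F := if h : i ∈ Set.range σ then 0 else b ⟨i, h⟩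
  let decompose (S : {S : ι → F // ∀ j, p.eval (S (σ j)) = c j S}) :
      {x : (K → F) × (J → F) // ∀ j, p.eval (x.2 j) = c j (extend x.1)} :=
    ⟨(fun k => S.1 k, fun j => S.1 (σ j)),
      fun j => (S.2 j).trans (hc j _ _ fun i hi => by simp only [extend, dif_neg hi])⟩
  have decompose_injective : Function.Injective decompose := by
    intro S S' h
    simp only [decompose, Subtype.mk.injEq, Prod.mk.injEq, funext_iff] at h
    apply Subtype.ext
    funext i
    by_cases hi : i ∈ Set.range σ
    · obtain ⟨j, rfl⟩ := hi
      exact h.2 j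
    · exact h.1 ⟨i, hi⟩
  have card_K : Fintype.card (K → F) = Fintype.card F ^ (Fintype.card ι - Fintype.card J) := by
    rw [Fintype.card_fun, Fintype.card_subtype_compl, Set.card_range_of_injective σ.injective]
  exact (Nat.card_le_card_of_injective decompose decompose_injective).trans <|
    card_K ▸ p.card_prod_eval_eq_le hp fun b j => c j (extend b)

theorem card_sub_vecMul_of_pow_succ_eq_zero_le {ι J : Type*} [Fintype ι] [Fintype J] {d : ℕ}
    (σ : J ↪ ι) (v : Fin d → F) (hv : v ≠ 0) (r : (ι → F) → J → F)
    (hr : ∀ S S', (∀ i ∉ Set.range σ, S i = S' i) → r S = r S') :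
    Nat.card {S : ι → F //
        r S - Matrix.vecMul v (Matrix.of fun (i : Fin d) j => S (σ j) ^ ((i : ℕ) + 1)) = 0} ≤
      Fintype.card F ^ (Fintype.card ι - Fintype.card J) * d ^ Fintype.card J := by
  simp only [vecMul_of_pow_succ, sub_eq_zero, funext_iff, eq_comm (a := r _ _)]
  exact ((shiftedPoly v).card_forall_eval_eq_le σ (degree_shiftedPoly_pos hv) (fun j S => r S j)
    fun j S S' h => congrFun (hr S S' h) j).trans <|
      Nat.mul_le_mul_left _ (Nat.pow_le_pow_left (natDegree_shiftedPoly_le v) _)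

end counting

theorem div_pow_le_div_pow_of_le_mul {N q D n m : ℕ} (hq : 0 < q) (hmn : m ≤ n)
    (hN : N ≤ q ^ (n - m) * D ^ m) : (N : ℝ) / q ^ n ≤ ((D : ℝ) / q) ^ m := by
  rw [div_pow, div_le_div_iff₀ (by positivity) (by positivity)]
  calc (N : ℝ) * q ^ m ≤ q ^ (n - m) * D ^ m * q ^ m := by gcongr; exact_mod_cast hN
    _ = D ^ m * q ^ n := by rw [mul_right_comm, ← pow_add, Nat.sub_add_cancel hmn, mul_comm]

theorem stmt13 (F : Type) [Field F] [Fintype F] (m₀ n' : ℕ)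
    (hn : 3 * m₀ < n')
    (xA xB : Fin m₀ → F) (xC : Fin (n' - 2 * m₀) → F)
    (hx : ¬(xA = 0 ∧ xB = 0 ∧ xC = 0)) :
    (Nat.card {S : Fin (4 * m₀) → F //
        xA -
          Matrix.vecMul xB
            ((Matrix.of fun (i : Fin m₀) (j : Fin m₀) =>
                (S ⟨2 * m₀ + j.val, by have := j.isLt; omega⟩) ^ ((i : ℕ) + 1))ᵀ +
              Matrix.of fun (i : Fin m₀) (j : Fin m₀) =>
                (S ⟨3 * m₀ + j.val, by have := j.isLt; omega⟩) ^ ((i : ℕ) + 1)) -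
          Matrix.vecMul xC
            (Matrix.of fun (i : Fin (n' - 2 * m₀)) (j : Fin m₀) =>
              (S ⟨j.val, by have := j.isLt; omega⟩) ^ ((i : ℕ) + 1)) = 0} : ℝ) /
      (Fintype.card F : ℝ) ^ (4 * m₀) ≤
    (((n' - 2 * m₀ : ℕ) : ℝ) / (Fintype.card F : ℝ)) ^ m₀ := by
  refine div_pow_le_div_pow_of_le_mul Fintype.card_pos (by omega) ?_
  by_cases hC : xC = 0
  · subst hC
    simp only [Matrix.zero_vecMul, sub_zero, Matrix.vecMul_add, sub_add_eq_sub_sub]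
    by_cases hB : xB = 0
    · subst hB
      simp [show xA ≠ 0 by tauto]
    · refine (card_sub_vecMul_of_pow_succ_eq_zero_le
        ((Fin.natAddEmb (3 * m₀)).trans (Fin.castLEEmb (by omega)))
        xB hB _ ?_).trans ?_
      · intro S S' h
        have hQ₃ : ∀ j : Fin m₀, S ⟨2 * m₀ + j, by omega⟩ = S' ⟨2 * m₀ + j, by omega⟩ :=
          fun j => h _ fun ⟨k, hk⟩ => absurd (Fin.ext_iff.mp hk) (by simp; omega)
        simp only [hQ₃]
      · simp only [Fintype.card_fin]
        gcongr
        omega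
  · refine (card_sub_vecMul_of_pow_succ_eq_zero_le (Fin.castLEEmb (by omega)) xC hC _ ?_).trans ?_
    · intro S S' h
      have hQ₃ : ∀ j : Fin m₀, S ⟨2 * m₀ + j, by omega⟩ = S' ⟨2 * m₀ + j, by omega⟩ :=
        fun j => h _ fun ⟨k, hk⟩ => absurd (Fin.ext_iff.mp hk) (by simp; omega)
      have hQ₄ : ∀ j : Fin m₀, S ⟨3 * m₀ + j, by omega⟩ = S' ⟨3 * m₀ + j, by omega⟩ :=
        fun j => h _ fun ⟨k, hk⟩ => absurd (Fin.ext_iff.mp hk) (by simp; omega)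
      simp only [hQ₃, hQ₄]
    · simp
end
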